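/- Every locally weakly systolic complex is 7-located and locally 5-large. That is, if X is a flag 5-large simplicial complex in which every extended 5-wheel is contained in the link of a vertex, then every dwheel in X with full wheels and boundary length at most 7 is contained in the link of a vertex. -/

import Mathlib

/-- A flag simplicial complex is determined by its 1-skeleton graph `G`.
A `k`-wheel `(c; r 0, …, r (k-1))`: `r` is an (injective) cycle and `c` is adjacent
to every rim vertex. -/
def IsWheel {V : Type*} (G : SimpleGraph V) {k : ℕ} (c : V) (r : ZMod k → V) : Prop :=
  Function.Injective r ∧ (∀ i, c ≠ r i) ∧ (∀ i, G.Adj (r i) (r (i + 1))) ∧ (∀ i, G.Adj c (r i))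

/-- A wheel that is a full (induced) subcomplex: the only adjacencies among rim
vertices are the consecutive ones. -/
def IsFullWheel {V : Type*} (G : SimpleGraph V) {k : ℕ} (c : V) (r : ZMod k → V) : Prop :=
  IsWheel G c r ∧ ∀ i j, G.Adj (r i) (r j) → j = i + 1 ∨ i = j + 1

/-- `5`-largeness: no induced (full) `4`-cycle. -/
def FiveLarge {V : Type*} (G : SimpleGraph V) : Prop :=
  ∀ a b c d : V, a ≠ c → b ≠ d → G.Adj a b → G.Adj b c → G.Adj c d → G.Adj d a →
    G.Adj a c ∨ G.Adj b d

/-- Local `5`-largeness: no vertex link contains an induced `4`-cycle. -/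
def LocallyFiveLarge {V : Type*} (G : SimpleGraph V) : Prop :=
  ∀ z a b c d : V, G.Adj z a → G.Adj z b → G.Adj z c → G.Adj z d →
    a ≠ c → b ≠ d → G.Adj a b → G.Adj b c → G.Adj c d → G.Adj d a →
    G.Adj a c ∨ G.Adj b d

/-- The extended `5`-wheel condition: every extended `5`-wheel `(c; r; a)` is
contained in the link of some vertex `z`. -/
def ExtFiveWheelCond {V : Type*} (G : SimpleGraph V) : Prop :=
  ∀ (c a : V) (r : ZMod 5 → V), IsWheel G c r →
    G.Adj a (r 0) → G.Adj a (r 1) → a ≠ c → ¬ G.Adj a c →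
    (∀ i : ZMod 5, i ≠ 0 → i ≠ 1 → a ≠ r i ∧ ¬ G.Adj a (r i)) →
    ∃ z : V, G.Adj z c ∧ G.Adj z a ∧ ∀ i, G.Adj z (r i)

/-- `m`-location.  A `(k,l)`-dwheel is the union of wheels
`W₁ = (w l; v 0, …, v (k-1))` and `W₂ = (v 1; w 0, …, w (l-1))` with
`v 2 = w (l-2)` (shared rim vertex) and either `v 0 = w 0` (planar, boundary
length `k+l-4`) or `v 0 ~ w 0` (nonplanar, boundary length `k+l-3`).
Here the center of `W₁` is `w (-1)` and the center of `W₂` is `v 1`.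
If both wheels are full and the boundary length is at most `m`, the dwheel is
contained in the link of some vertex. -/
def MLocated {V : Type*} (G : SimpleGraph V) (m : ℕ) : Prop :=
  ∀ (k l : ℕ), 4 ≤ k → 4 ≤ l → ∀ (v : ZMod k → V) (w : ZMod l → V),
    IsFullWheel G (w (-1)) v → IsFullWheel G (v 1) w → v 2 = w (-2) →
    ((v 0 = w 0 ∧ k + l - 4 ≤ m) ∨ (v 0 ≠ w 0 ∧ G.Adj (v 0) (w 0) ∧ k + l - 3 ≤ m)) →
    ∃ z : V, (∀ i, G.Adj z (v i)) ∧ (∀ i, G.Adj z (w i))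

/-!
Full 4-wheels contain an induced square, so 5-largeness rules them out; the length bound then
leaves the planar (5,5), (5,6), (6,5) and the nonplanar (5,5) dwheels, and (6,5) is the mirror
image of (5,6). In each case a boundary vertex adjacent to two consecutive rim vertices of a full
5-wheel, but outside the closed star of its centre, forms an extended 5-wheel, so some vertex `z`
sees the whole wheel and that boundary vertex. Squares with one missing diagonal then propagate
the adjacency of `z` along the rest of the boundary. In the (5,6) case, and in the nonplanar
(5,5) case when this stalls, `z` closes a new 5-wheel around a rim vertex and the argument is run
once more.
-/

section Wheels

variable {V : Type*} {G : SimpleGraph V} {k : ℕ} {c a : V} {r : ZMod k → V}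

theorem IsWheel.adj_succ (h : IsWheel G c r) (i : ZMod k) : G.Adj (r i) (r (i + 1)) := h.2.2.1 i

theorem IsWheel.adj_center (h : IsWheel G c r) (i : ZMod k) : G.Adj c (r i) := h.2.2.2 i

theorem IsWheel.rim_ne (h : IsWheel G c r) (i j : ZMod k) (hij : i ≠ j := by decide) :
    r i ≠ r j :=
  h.1.ne hij

theorem IsFullWheel.not_adj (h : IsFullWheel G c r) (i j : ZMod k)
    (hij : j ≠ i + 1 := by decide) (hji : i ≠ j + 1 := by decide) : ¬ G.Adj (r i) (r j) :=
  fun hadj => (h.2 i j hadj).elim hij hji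

/-- `hcyc` says that `f` is an automorphism of the rim cycle. -/
theorem IsFullWheel.comp (h : IsFullWheel G c r) {f : ZMod k → ZMod k}
    (hf : Function.Injective f)
    (hcyc : ∀ i j, f j = f i + 1 ∨ f i = f j + 1 ↔ j = i + 1 ∨ i = j + 1) :
    IsFullWheel G c (r ∘ f) := by
  obtain ⟨⟨hinj, hne, hrim, hspoke⟩, hfull⟩ := h
  refine ⟨⟨hinj.comp hf, fun i => hne _, fun i => ?_, fun i => hspoke _⟩,
    fun i j hadj => (hcyc i j).1 (hfull _ _ hadj)⟩
  rcases (hcyc i (i + 1)).2 (.inl rfl) with h | h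
  · simpa [h] using hrim (f i)
  · simpa [h] using (hrim (f (i + 1))).symm

theorem IsFullWheel.rotate (h : IsFullWheel G c r) (s : ZMod k) :
    IsFullWheel G c (fun i => r (i + s)) :=
  h.comp (add_left_injective s) fun i j => by simp only [add_right_comm _ s 1, add_left_inj]

theorem IsFullWheel.reflect (h : IsFullWheel G c r) : IsFullWheel G c (fun i => r (-i)) :=
  h.comp neg_injective fun i j => by
    constructor <;> rintro (h | h)
    exacts [.inr (by linear_combination h), .inl (by linear_combination h),
      .inr (by linear_combination h), .inl (by linear_combination h)]

/-- `ZMod 5` is `Fin 5` by definition, so vector notation describes 5-wheels. -/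
theorem isWheel_five {x₀ x₁ x₂ x₃ x₄ : V}
    (h₀₁ : G.Adj x₀ x₁) (h₁₂ : G.Adj x₁ x₂) (h₂₃ : G.Adj x₂ x₃) (h₃₄ : G.Adj x₃ x₄)
    (h₄₀ : G.Adj x₄ x₀) (hc₀ : G.Adj c x₀) (hc₁ : G.Adj c x₁) (hc₂ : G.Adj c x₂)
    (hc₃ : G.Adj c x₃) (hc₄ : G.Adj c x₄) (h₀₂ : x₀ ≠ x₂) (h₁₃ : x₁ ≠ x₃) (h₂₄ : x₂ ≠ x₄)
    (h₃₀ : x₃ ≠ x₀) (h₄₁ : x₄ ≠ x₁) :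
    IsWheel (k := 5) G c ![x₀, x₁, x₂, x₃, x₄] := by
  have hspoke : ∀ i : ZMod 5, G.Adj c (![x₀, x₁, x₂, x₃, x₄] i) := by
    intro i; fin_cases i
    exacts [hc₀, hc₁, hc₂, hc₃, hc₄]
  refine ⟨?_, fun i => (hspoke i).ne, fun i => ?_, hspoke⟩
  · change Function.Injective (![x₀, x₁, x₂, x₃, x₄] : Fin 5 → V)
    simp [Function.Injective, Fin.forall_fin_succ, h₀₁.ne, h₀₁.ne', h₁₂.ne, h₁₂.ne', h₂₃.ne,
      h₂₃.ne', h₃₄.ne, h₃₄.ne', h₄₀.ne, h₄₀.ne', h₀₂, h₀₂.symm, h₁₃, h₁₃.symm, h₂₄, h₂₄.symm,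
      h₃₀, h₃₀.symm, h₄₁, h₄₁.symm]
  · fin_cases i
    exacts [h₀₁, h₁₂, h₂₃, h₃₄, h₄₀]

theorem FiveLarge.adj_of_not_adj (h5 : FiveLarge G) {a b c d : V} (hab : G.Adj a b)
    (hbc : G.Adj b c) (hcd : G.Adj c d) (hda : G.Adj d a) (hac : a ≠ c) (hbd : b ≠ d)
    (hnbd : ¬ G.Adj b d) : G.Adj a c :=
  (h5 a b c d hac hbd hab hbc hcd hda).resolve_right hnbd

theorem FiveLarge.locallyFiveLarge (h5 : FiveLarge G) : LocallyFiveLarge G :=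
  fun _ a b c d _ _ _ _ => h5 a b c d

theorem FiveLarge.not_isFullWheel_four (h5 : FiveLarge G) {r : ZMod 4 → V}
    (h : IsFullWheel G c r) : False :=
  absurd (h5.adj_of_not_adj (h.1.adj_succ 0) (h.1.adj_succ 1) (h.1.adj_succ 2)
    (h.1.adj_succ 3) (h.1.rim_ne 0 2) (h.1.rim_ne 1 3) (h.not_adj 1 3)) (h.not_adj 0 2)

/-- The square `a, r s, c, r i` would have no diagonal. -/
theorem FiveLarge.not_adj_rim (h5 : FiveLarge G) (hw : IsFullWheel G c r) (hac : a ≠ c)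
    (hnac : ¬ G.Adj a c) {s : ZMod k} (has : G.Adj a (r s)) (i : ZMod k)
    (his : i ≠ s := by decide) (hi : s ≠ i + 1 := by decide) (hs : i ≠ s + 1 := by decide) :
    ¬ G.Adj a (r i) := fun hai =>
  hw.not_adj i s hi hs <| h5.adj_of_not_adj hai.symm has (hw.1.adj_center s).symm
    (hw.1.adj_center i) (hw.1.rim_ne i s his) hac hnac

theorem ExtFiveWheelCond.exists_adj_five (hext : ExtFiveWheelCond G) {x₀ x₁ x₂ x₃ x₄ : V}
    (hw : IsWheel (k := 5) G c ![x₀, x₁, x₂, x₃, x₄]) (ha₀ : G.Adj a x₀)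
    (ha₁ : G.Adj a x₁) (hac : a ≠ c) (hnac : ¬ G.Adj a c) (ha₂ : a ≠ x₂ ∧ ¬ G.Adj a x₂)
    (ha₃ : a ≠ x₃ ∧ ¬ G.Adj a x₃) (ha₄ : a ≠ x₄ ∧ ¬ G.Adj a x₄) :
    ∃ z, G.Adj z c ∧ G.Adj z a ∧ G.Adj z x₀ ∧ G.Adj z x₁ ∧ G.Adj z x₂ ∧ G.Adj z x₃ ∧
      G.Adj z x₄ := by
  obtain ⟨z, hzc, hza, hz⟩ := hext c a _ hw ha₀ ha₁ hac hnac (by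
    intro i h0 h1; fin_cases i
    exacts [absurd rfl h0, absurd rfl h1, ha₂, ha₃, ha₄])
  exact ⟨z, hzc, hza, hz 0, hz 1, hz 2, hz 3, hz 4⟩

/-- Five-largeness supplies the non-adjacencies to the other three rim vertices that the
extended 5-wheel condition asks for. -/
theorem ExtFiveWheelCond.exists_adj_of_isFullWheel (hext : ExtFiveWheelCond G)
    (h5 : FiveLarge G) {r : ZMod 5 → V} (hw : IsFullWheel G c r) {s : ZMod 5}
    (has : G.Adj a (r s)) (has' : G.Adj a (r (s + 1))) (hac : a ≠ c) (hnac : ¬ G.Adj a c) :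
    ∃ z, G.Adj z c ∧ G.Adj z a ∧ ∀ i, G.Adj z (r i) := by
  have hw' := hw.rotate s
  have ha₀ : G.Adj a (r (0 + s)) := by rwa [zero_add]
  have ha₁ : G.Adj a (r (1 + s)) := by rwa [add_comm]
  have hne : ∀ i, a ≠ r (i + s) := fun i h => hnac (h ▸ (hw.1.adj_center _).symm)
  obtain ⟨z, hzc, hza, hz⟩ := hext c a _ hw'.1 ha₀ ha₁ hac hnac (by
    intro i h0 h1; fin_cases i
    exacts [absurd rfl h0, absurd rfl h1,
      ⟨hne 2, h5.not_adj_rim hw' hac hnac ha₀ 2⟩, ⟨hne 3, h5.not_adj_rim hw' hac hnac ha₀ 3⟩,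
      ⟨hne 4, h5.not_adj_rim hw' hac hnac ha₁ 4⟩])
  exact ⟨z, hzc, hza, fun i => by simpa using hz (i - s)⟩

end Wheels

section DWheels

variable {V : Type*} {G : SimpleGraph V}

theorem exists_adj_dwheel55_planar (h5 : FiveLarge G) (hext : ExtFiveWheelCond G)
    {v w : ZMod 5 → V} (h1 : IsFullWheel G (w 4) v) (h2 : IsFullWheel G (v 1) w)
    (h2eq : v 2 = w 3) (h0eq : v 0 = w 0) :
    ∃ z, (∀ i, G.Adj z (v i)) ∧ ∀ i, G.Adj z (w i) := by
  have hv4w0 : G.Adj (v 4) (w 0) := h0eq ▸ h1.1.adj_succ 4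
  obtain ⟨z, hzv1, hzv4, hzw⟩ := hext.exists_adj_of_isFullWheel h5 h2 (s := 4)
    (h1.1.adj_center 4).symm hv4w0 (h1.1.rim_ne 4 1) (h1.not_adj 4 1)
  have hzv3 : G.Adj z (v 3) :=
    h5.adj_of_not_adj hzv4 (h1.1.adj_succ 3).symm (h1.1.adj_succ 2).symm (h2eq ▸ (hzw 3).symm)
      (G.ne_of_adj_of_not_adj hzv1 (h1.not_adj 3 1)) (h1.1.rim_ne 4 2) (h1.not_adj 4 2)
  refine ⟨z, fun i => ?_, hzw⟩
  fin_cases i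
  exacts [h0eq ▸ hzw 0, hzv1, h2eq ▸ hzw 3, hzv3, hzv4]

/-- When the vertex `z` seeing `W₂` and `v 3` misses `v 4`, the vertex `v 4` extends the 5-wheel
`(w 0; w 4, v 0, v 1, w 1, z)`. -/
theorem exists_adj_dwheel55_nonplanar_of_not_adj (h5 : FiveLarge G) (hext : ExtFiveWheelCond G)
    {v w : ZMod 5 → V} (h1 : IsFullWheel G (w 4) v) (h2 : IsFullWheel G (v 1) w)
    (h2eq : v 2 = w 3) (h0adj : G.Adj (v 0) (w 0)) {z : V} (hzv1 : G.Adj z (v 1))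
    (hzv3 : G.Adj z (v 3)) (hzw : ∀ i, G.Adj z (w i)) (hzv4 : ¬ G.Adj z (v 4)) :
    ∃ y, (∀ i, G.Adj y (v i)) ∧ ∀ i, G.Adj y (w i) := by
  have hv3w3 : G.Adj (v 3) (w 3) := h2eq ▸ (h1.1.adj_succ 2).symm
  have hv3v1_ne : v 3 ≠ v 1 := h1.1.rim_ne 3 1
  have hv3v1 : ¬ G.Adj (v 3) (v 1) := h1.not_adj 3 1
  have hv3w0 : ¬ G.Adj (v 3) (w 0) := h5.not_adj_rim h2 hv3v1_ne hv3v1 hv3w3 0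
  have hv3w1 : ¬ G.Adj (v 3) (w 1) := h5.not_adj_rim h2 hv3v1_ne hv3v1 hv3w3 1
  have hv4w1 : ¬ G.Adj (v 4) (w 1) :=
    h5.not_adj_rim h2 (h1.1.rim_ne 4 1) (h1.not_adj 4 1) (h1.1.adj_center 4).symm 1
  have hzv4_ne : z ≠ v 4 := G.ne_of_adj_of_not_adj (hzw 1) hv4w1
  have hv4w0 : ¬ G.Adj (v 4) (w 0) := fun h => hzv4 <| h5.adj_of_not_adj hzv3
    (h1.1.adj_succ 3) h (hzw 0).symm hzv4_ne
    (G.ne_of_adj_of_not_adj hv3w3 (h2.not_adj 0 3)) hv3w0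
  obtain ⟨y, hyw0, hyv4, hyw4, hyv0, hyv1, hyw1, hyz⟩ := hext.exists_adj_five
    (isWheel_five (h1.1.adj_center 0) (h1.1.adj_succ 0) (h2.1.adj_center 1) (hzw 1).symm
      (hzw 4) (h2.1.adj_succ 4).symm h0adj.symm (h2.1.adj_center 0).symm (h2.1.adj_succ 0)
      (hzw 0).symm (h1.1.adj_center 1).ne
      (G.ne_of_adj_of_not_adj (h1.1.adj_center 0).symm (h2.not_adj 1 4)) hzv1.ne'
      (h2.1.rim_ne 1 4) (G.ne_of_adj_of_not_adj hzv3 (h1.not_adj 0 3)))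
    (h1.1.adj_center 4).symm (h1.1.adj_succ 4)
    (G.ne_of_adj_of_not_adj (h2.1.adj_succ 0) hv4w1).symm hv4w0
    ⟨h1.1.rim_ne 4 1, h1.not_adj 4 1⟩
    ⟨G.ne_of_adj_of_not_adj (h1.1.adj_center 4).symm (h2.not_adj 1 4), hv4w1⟩
    ⟨hzv4_ne.symm, fun h => hzv4 h.symm⟩
  have hyv3 : G.Adj y (v 3) := h5.adj_of_not_adj hyv4 (h1.1.adj_succ 3).symm hzv3.symm
    hyz.symm (G.ne_of_adj_of_not_adj hyw1 hv3w1)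
    hzv4_ne.symm fun h => hzv4 h.symm
  have hyv2 : G.Adj y (v 2) := h5.adj_of_not_adj hyv1 (h1.1.adj_succ 1) (h1.1.adj_succ 2)
    hyv3.symm (G.ne_of_adj_of_not_adj hyw1 (h2eq ▸ h2.not_adj 3 1)) (h1.1.rim_ne 1 3)
    (h1.not_adj 1 3)
  have hyw2 : G.Adj y (w 2) := h5.adj_of_not_adj hyw1 (h2.1.adj_succ 1) (h2.1.adj_succ 2)
    (h2eq ▸ hyv2.symm) (G.ne_of_adj_of_not_adj hyw0 (h2.not_adj 2 0)) (h2.1.rim_ne 1 3)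
    (h2.not_adj 1 3)
  refine ⟨y, fun i => ?_, fun i => ?_⟩
  · fin_cases i
    exacts [hyv0, hyv1, hyv2, hyv3, hyv4]
  · fin_cases i
    exacts [hyw0, hyw1, hyw2, h2eq ▸ hyv2, hyw4]

theorem exists_adj_dwheel55_nonplanar (h5 : FiveLarge G) (hext : ExtFiveWheelCond G)
    {v w : ZMod 5 → V} (h1 : IsFullWheel G (w 4) v) (h2 : IsFullWheel G (v 1) w)
    (h2eq : v 2 = w 3) (h0adj : G.Adj (v 0) (w 0)) :
    ∃ z, (∀ i, G.Adj z (v i)) ∧ ∀ i, G.Adj z (w i) := by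
  obtain ⟨z, hzv1, hzv3, hzw⟩ := hext.exists_adj_of_isFullWheel h5 h2 (s := 3)
    (h2eq ▸ (h1.1.adj_succ 2).symm) (h1.1.adj_center 3).symm (h1.1.rim_ne 3 1) (h1.not_adj 3 1)
  by_cases hzv4 : G.Adj z (v 4)
  · have hzv0 : G.Adj z (v 0) := h5.adj_of_not_adj hzv1 (h1.1.adj_succ 0).symm
      (h1.1.adj_succ 4).symm hzv4.symm (G.ne_of_adj_of_not_adj hzv3 (h1.not_adj 0 3))
      (h1.1.rim_ne 1 4) (h1.not_adj 1 4)
    refine ⟨z, fun i => ?_, hzw⟩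
    fin_cases i
    exacts [hzv0, hzv1, h2eq ▸ hzw 3, hzv3, hzv4]
  · exact exists_adj_dwheel55_nonplanar_of_not_adj h5 hext h1 h2 h2eq h0adj hzv1 hzv3 hzw hzv4

theorem exists_adj_dwheel56_planar (h5 : FiveLarge G) (hext : ExtFiveWheelCond G)
    {v : ZMod 5 → V} {w : ZMod 6 → V} (h1 : IsFullWheel G (w 5) v)
    (h2 : IsFullWheel G (v 1) w) (h2eq : v 2 = w 4) (h0eq : v 0 = w 0) :
    ∃ z, (∀ i, G.Adj z (v i)) ∧ ∀ i, G.Adj z (w i) := by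
  obtain ⟨z, hzw5, hzw1, hzv⟩ := hext.exists_adj_of_isFullWheel h5 h1 (s := 0)
    (h0eq ▸ (h2.1.adj_succ 0).symm) (h2.1.adj_center 1).symm (h2.1.rim_ne 1 5) (h2.not_adj 1 5)
  have hv3w5 : G.Adj (v 3) (w 5) := (h1.1.adj_center 3).symm
  have hv3v1_ne : v 3 ≠ v 1 := h1.1.rim_ne 3 1
  have hv3v1 : ¬ G.Adj (v 3) (v 1) := h1.not_adj 3 1
  obtain ⟨y, hyv1, hyv3, hyw4, -, hyw1, hyw2, hyw3⟩ := hext.exists_adj_five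
    (isWheel_five (h2eq ▸ hzv 2).symm hzw1 (h2.1.adj_succ 1) (h2.1.adj_succ 2)
      (h2.1.adj_succ 3) (h2.1.adj_center 4) (hzv 1).symm (h2.1.adj_center 1)
      (h2.1.adj_center 2) (h2.1.adj_center 3) (h2.1.rim_ne 4 1)
      (G.ne_of_adj_of_not_adj hzw5 (h2.not_adj 2 5)) (h2.1.rim_ne 1 3) (h2.1.rim_ne 2 4)
      (G.ne_of_adj_of_not_adj hzw5 (h2.not_adj 3 5)).symm)
    (h2eq ▸ (h1.1.adj_succ 2).symm) (hzv 3).symm hv3v1_ne hv3v1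
    ⟨G.ne_of_adj_of_not_adj hv3w5 (h2.not_adj 1 5), h5.not_adj_rim h2 hv3v1_ne hv3v1 hv3w5 1⟩
    ⟨G.ne_of_adj_of_not_adj hv3w5 (h2.not_adj 2 5), h5.not_adj_rim h2 hv3v1_ne hv3v1 hv3w5 2⟩
    ⟨G.ne_of_adj_of_not_adj hv3w5 (h2.not_adj 3 5), h5.not_adj_rim h2 hv3v1_ne hv3v1 hv3w5 3⟩
  have hyw5 : G.Adj y (w 5) := h5.adj_of_not_adj hyv1 (h1.1.adj_center 1).symm
    (h1.1.adj_center 3) hyv3.symm (G.ne_of_adj_of_not_adj hyw2 (h2.not_adj 5 2))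
    (h1.1.rim_ne 1 3) (h1.not_adj 1 3)
  have hyw0 : G.Adj y (w 0) := h5.adj_of_not_adj hyw1 (h2.1.adj_succ 0).symm
    (h2.1.adj_succ 5).symm hyw5.symm (G.ne_of_adj_of_not_adj hyw3 (h2.not_adj 0 3))
    (h2.1.rim_ne 1 5) (h2.not_adj 1 5)
  have hyv4 : G.Adj y (v 4) := h5.adj_of_not_adj hyv3 (h1.1.adj_succ 3) (h1.1.adj_succ 4)
    (h0eq ▸ hyw0.symm) (G.ne_of_adj_of_not_adj hyv1 (h1.not_adj 4 1)) (h1.1.rim_ne 3 0)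
    (h1.not_adj 3 0)
  refine ⟨y, fun i => ?_, fun i => ?_⟩
  · fin_cases i
    exacts [h0eq ▸ hyw0, hyv1, h2eq ▸ hyw4, hyv3, hyv4]
  · fin_cases i
    exacts [hyw0, hyw1, hyw2, hyw3, hyw4, hyw5]

theorem exists_adj_dwheel65_planar (h5 : FiveLarge G) (hext : ExtFiveWheelCond G)
    {v : ZMod 6 → V} {w : ZMod 5 → V} (h1 : IsFullWheel G (w 4) v)
    (h2 : IsFullWheel G (v 1) w) (h2eq : v 2 = w 3) (h0eq : v 0 = w 0) :
    ∃ z, (∀ i, G.Adj z (v i)) ∧ ∀ i, G.Adj z (w i) := by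
  obtain ⟨z, hzw, hzv⟩ := exists_adj_dwheel56_planar h5 hext (v := fun i => w (-i))
    (w := fun j => v (-j)) h2.reflect h1.reflect h2eq.symm h0eq.symm
  exact ⟨z, fun i => by simpa using hzv (-i), fun i => by simpa using hzw (-i)⟩

end DWheels

/-- Every locally weakly systolic complex (flag, 5-large, satisfying the
extended-5-wheel condition) is 7-located and locally 5-large. -/
theorem locally_weakly_systolic_seven_located {V : Type*} (G : SimpleGraph V)
    (h5 : FiveLarge G) (hext : ExtFiveWheelCond G) :
    MLocated G 7 ∧ LocallyFiveLarge G := by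
  refine ⟨fun k l hk hl v w h1 h2 h2eq hcase => ?_, h5.locallyFiveLarge⟩
  have hk4 : k ≠ 4 := by rintro rfl; exact h5.not_isFullWheel_four h1
  have hl4 : l ≠ 4 := by rintro rfl; exact h5.not_isFullWheel_four h2
  rcases hcase with ⟨h0eq, hkl⟩ | ⟨-, h0adj, hkl⟩
  · obtain ⟨rfl, rfl⟩ | ⟨rfl, rfl⟩ | ⟨rfl, rfl⟩ :
        k = 5 ∧ l = 5 ∨ k = 5 ∧ l = 6 ∨ k = 6 ∧ l = 5 := by omega
    exacts [exists_adj_dwheel55_planar h5 hext h1 h2 h2eq h0eq,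
      exists_adj_dwheel56_planar h5 hext h1 h2 h2eq h0eq,
      exists_adj_dwheel65_planar h5 hext h1 h2 h2eq h0eq]
  · obtain ⟨rfl, rfl⟩ : k = 5 ∧ l = 5 := by omega
    exact exists_adj_dwheel55_nonplanar h5 hext h1 h2 h2eq h0adj
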